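/- Let f : ℝ → ℝ be continuous and suppose there exist points a₁, …, a_{k+4} with f(a_j) = a_{j+1} for 1 ≤ j ≤ k+3, f(a_{k+4}) = a_{k+4} = 0, a_{k+1} < a_{k+2} < 0 < a_{k+3}, and a_j ≠ 0 for all j ≤ k+3. Then there exists a point b_{k+1} strictly between a_{k+1} and a_{k+2} with f(b_{k+1}) = a_{k+4} = 0, and points b₁, …, b_k with f(b_j) = b_{j+1} for 1 ≤ j ≤ k (where b_{k+1} is as above) and sign(b_j) = sign(a_j) for 1 ≤ j ≤ k. -/
import Mathlib


/-- The alphabet of orbit pattern tags: `L` for a leftward move, `R` for a rightward move. -/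
inductive Letter : Type
  | L : Letter
  | R : Letter
deriving DecidableEq

open Letter

/-- A continuous interval map `f` admits the orbit pattern tag `w` if there is an
eventually fixed orbit `x 0, x 1, ..., x w.length` of `f` (the last point being fixed,
all earlier points different from it) whose `j`-th move is labelled by the `j`-th
letter of `w`: `L` if the orbit moves left, `R` if it moves right. -/
def Admits (f : ℝ → ℝ) (w : List Letter) : Prop :=
  ∃ x : ℕ → ℝ,
    (∀ j < w.length, f (x j) = x (j + 1)) ∧
    f (x w.length) = x w.length ∧
    (∀ j < w.length, x j ≠ x w.length) ∧
    (∀ j : Fin w.length,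
      (w.get j = L ∧ x ((j : ℕ) + 1) < x (j : ℕ)) ∨
      (w.get j = R ∧ x (j : ℕ) < x ((j : ℕ) + 1)))

/-- One step of reduction on words: replace an adjacent `LL` by `L`, an adjacent `RR`
by `R`, or delete an adjacent `LR` or `RL`. -/
inductive Red : List Letter → List Letter → Prop
  | ll (v v' : List Letter) : Red (v ++ [L, L] ++ v') (v ++ [L] ++ v')
  | rr (v v' : List Letter) : Red (v ++ [R, R] ++ v') (v ++ [R] ++ v')
  | lr (v v' : List Letter) : Red (v ++ [L, R] ++ v') (v ++ v')
  | rl (v v' : List Letter) : Red (v ++ [R, L] ++ v') (v ++ v')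

/-- One derivation step: a reduction, or tail formation (passing to a suffix). -/
inductive Step : List Letter → List Letter → Prop
  | red {w u : List Letter} : Red w u → Step w u
  | tail {w u : List Letter} : u <:+ w → Step w u

/-- `u` is obtained from `w` by finitely many reductions. -/
def Reducible : List Letter → List Letter → Prop := Relation.ReflTransGen Red

/-- `u` is derivable from `w`: finitely many reductions and tail formations, in any order. -/
def Derivable : List Letter → List Letter → Prop := Relation.ReflTransGen Step

lemma ivt_step (f : ℝ → ℝ) (hf : Continuous f) (hf0 : f 0 = 0) (p y : ℝ) (hp : p ≠ 0)
    (hy : (f p < y ∧ y < 0) ∨ (0 < y ∧ y < f p)) :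
    ∃ x, ((p < x ∧ x < 0) ∨ (0 < x ∧ x < p)) ∧ f x = y := by
  rcases hp.lt_or_gt with h | h
  · rcases hy with ⟨hy1, hy2⟩ | ⟨hy1, hy2⟩
    · have hmem : y ∈ Set.Ioo (f p) (f 0) := by rw [hf0]; exact ⟨hy1, hy2⟩
      obtain ⟨x, hx, hfx⟩ := intermediate_value_Ioo h.le hf.continuousOn hmem
      exact ⟨x, Or.inl ⟨hx.1, hx.2⟩, hfx⟩
    · have hmem : y ∈ Set.Ioo (f 0) (f p) := by rw [hf0]; exact ⟨hy1, hy2⟩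
      obtain ⟨x, hx, hfx⟩ := intermediate_value_Ioo' h.le hf.continuousOn hmem
      exact ⟨x, Or.inl ⟨hx.1, hx.2⟩, hfx⟩
  · rcases hy with ⟨hy1, hy2⟩ | ⟨hy1, hy2⟩
    · have hmem : y ∈ Set.Ioo (f p) (f 0) := by rw [hf0]; exact ⟨hy1, hy2⟩
      obtain ⟨x, hx, hfx⟩ := intermediate_value_Ioo' h.le hf.continuousOn hmem
      exact ⟨x, Or.inr ⟨hx.1, hx.2⟩, hfx⟩
    · have hmem : y ∈ Set.Ioo (f 0) (f p) := by rw [hf0]; exact ⟨hy1, hy2⟩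
      obtain ⟨x, hx, hfx⟩ := intermediate_value_Ioo h.le hf.continuousOn hmem
      exact ⟨x, Or.inr ⟨hx.1, hx.2⟩, hfx⟩

/-- the IVT construction behind uRRLw → uRw (indices 1-based). -/
theorem stmt18 (f : ℝ → ℝ) (hf : Continuous f) (k : ℕ) (a : ℕ → ℝ)
    (horb : ∀ j, 1 ≤ j → j ≤ k + 3 → f (a j) = a (j + 1))
    (hfix : f (a (k + 4)) = a (k + 4)) (hzero : a (k + 4) = 0)
    (h1 : a (k + 1) < a (k + 2)) (h2 : a (k + 2) < 0) (h3 : 0 < a (k + 3))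
    (hne : ∀ j, 1 ≤ j → j ≤ k + 3 → a j ≠ 0) :
    ∃ b : ℕ → ℝ,
      a (k + 1) < b (k + 1) ∧ b (k + 1) < a (k + 2) ∧ f (b (k + 1)) = 0 ∧
      (∀ j, 1 ≤ j → j ≤ k → f (b j) = b (j + 1)) ∧
      (∀ j, 1 ≤ j → j ≤ k → ((0 < b j ↔ 0 < a j) ∧ (b j < 0 ↔ a j < 0))) := by
  have hf0 : f 0 = 0 := by rw [hzero] at hfix; exact hfix
  have hfa1 : f (a (k + 1)) = a (k + 2) := horb (k + 1) (by omega) (by omega)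
  have hfa2 : f (a (k + 2)) = a (k + 3) := horb (k + 2) (by omega) (by omega)
  have hmem : (0 : ℝ) ∈ Set.Ioo (f (a (k + 1))) (f (a (k + 2))) := by
    rw [hfa1, hfa2]; exact ⟨h2, h3⟩
  obtain ⟨b0, hb0, hfb0⟩ := intermediate_value_Ioo h1.le hf.continuousOn hmem
  have key : ∀ m, m ≤ k → ∃ b : ℕ → ℝ, b (k + 1) = b0 ∧
      (∀ i, k + 1 - m ≤ i → i ≤ k → f (b i) = b (i + 1)) ∧
      (∀ i, k + 1 - m ≤ i → i ≤ k + 1 → ((a i < b i ∧ b i < 0) ∨ (0 < b i ∧ b i < a i))) := by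
    intro m
    induction m with
    | zero =>
      intro _
      refine ⟨fun _ => b0, rfl, fun i hi1 hi2 => by omega, fun i hi1 hi2 => ?_⟩
      have : i = k + 1 := by omega
      subst this
      exact Or.inl ⟨hb0.1, lt_trans hb0.2 h2⟩
    | succ m ih =>
      intro hm
      obtain ⟨b, hb1, hb2, hb3⟩ := ih (by omega)
      set j := k - m with hj
      have hj1 : 1 ≤ j := by omega
      have hjk : j ≤ k := by omega
      have hfaj : f (a j) = a (j + 1) := horb j (by omega) (by omega)
      have hbtw := hb3 (j + 1) (by omega) (by omega)
      obtain ⟨x, hx, hfx⟩ := ivt_step f hf hf0 (a j) (b (j + 1))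
        (hne j (by omega) (by omega)) (by rw [hfaj]; exact hbtw)
      refine ⟨Function.update b j x, ?_, ?_, ?_⟩
      · rw [Function.update_of_ne (by omega), hb1]
      · intro i hi1 hi2
        have hi1' : j ≤ i := by omega
        rcases eq_or_lt_of_le hi1' with he | hl
        · subst he
          rw [Function.update_self, Function.update_of_ne (by omega)]
          exact hfx
        · rw [Function.update_of_ne (by omega), Function.update_of_ne (by omega)]
          exact hb2 i (by omega) hi2
      · intro i hi1 hi2
        have hi1' : j ≤ i := by omega
        rcases eq_or_lt_of_le hi1' with he | hl
        · subst he
          rw [Function.update_self]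
          exact hx
        · rw [Function.update_of_ne (by omega)]
          exact hb3 i (by omega) hi2
  obtain ⟨b, hb1, hb2, hb3⟩ := key k le_rfl
  refine ⟨b, ?_, ?_, ?_, ?_, ?_⟩
  · rw [hb1]; exact hb0.1
  · rw [hb1]; exact hb0.2
  · rw [hb1]; exact hfb0
  · intro j hj1 hj2
    exact hb2 j (by omega) hj2
  · intro j hj1 hj2
    rcases hb3 j (by omega) (by omega) with ⟨ha, hb⟩ | ⟨ha, hb⟩
    · exact ⟨⟨fun h => by linarith, fun h => by linarith⟩,
        ⟨fun h => by linarith, fun h => by linarith⟩⟩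
    · exact ⟨⟨fun h => by linarith, fun h => by linarith⟩,
        ⟨fun h => by linarith, fun h => by linarith⟩⟩
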